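/- Loop insertion inverts single loop erasure: let ω be a walk on ℤ^d that is not self-avoiding, and let C = (ω_{τ*}, …, ω_τ) be the self-avoiding polygon removed by the single loop erasure LE¹(ω). Then inserting the oriented cycle determined by C into LE¹(ω) recovers ω: LE¹(ω) ⊕ [C] = ω, where [C] is the rotation class of C. -/

import Mathlib

open scoped ENNReal NNReal BigOperators Classical

noncomputable section

namespace LWW

/-- A point of the lattice ℤ^d. -/
abbrev Pt (d : ℕ) := Fin d → ℤ

/-- ℓ¹ distance on ℤ^d. -/
def dist1 {d : ℕ} (x y : Pt d) : ℕ := ∑ i, (x i - y i).natAbs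

/-- Nearest-neighbour adjacency on ℤ^d. -/
def Adj {d : ℕ} (x y : Pt d) : Prop := dist1 x y = 1

/-- Auxiliary function for single loop erasure: scan the list, keeping the
self-avoiding prefix `pre`; when the first repeated vertex is met, return the
loop-erased list together with the removed loop. -/
def le1Aux {α : Type*} [DecidableEq α] : List α → List α → List α × Option (List α)
  | pre, [] => (pre, none)
  | pre, x :: rest =>
    if x ∈ pre then
      (pre.takeWhile (fun y => y ≠ x) ++ x :: rest,
        some (pre.dropWhile (fun y => y ≠ x) ++ [x]))
    else le1Aux (pre ++ [x]) rest

/-- Single loop erasure LE¹. -/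
def LE1 {α : Type*} [DecidableEq α] (l : List α) : List α := (le1Aux [] l).1

/-- The loop removed by a single loop erasure (if the list is not self-avoiding). -/
def removedLoop {α : Type*} [DecidableEq α] (l : List α) : Option (List α) := (le1Aux [] l).2

/-- Iterate single loop erasure (with fuel), collecting the multiset of removed loops. -/
def leAux {α : Type*} [DecidableEq α] : ℕ → List α → List α × Multiset (List α)
  | 0, l => (l, 0)
  | n + 1, l =>
    match le1Aux ([] : List α) l with
    | (_, none) => (l, 0)
    | (l', some c) => ((leAux n l').1, c ::ₘ (leAux n l').2)

/-- Loop erasure LE. -/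
def LE {α : Type*} [DecidableEq α] (l : List α) : List α := (leAux l.length l).1

/-- The multiset of loops removed by loop erasure. -/
def erasedLoops {α : Type*} [DecidableEq α] (l : List α) : Multiset (List α) :=
  (leAux l.length l).2

/-- The number of loops removed by loop erasure. -/
def nLoops {α : Type*} [DecidableEq α] (l : List α) : ℕ := Multiset.card (erasedLoops l)

/-- A (finite) nearest-neighbour walk on ℤ^d, recorded as its (nonempty) list of vertices. -/
structure Walk (d : ℕ) where
  pts : List (Pt d)
  ne : pts ≠ []
  chain : pts.Chain' Adj

namespace Walk

variable {d : ℕ}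

/-- The number of steps of a walk. -/
def len (ω : Walk d) : ℕ := ω.pts.length - 1

/-- The initial vertex of a walk. -/
def start (ω : Walk d) : Pt d := ω.pts.headI

/-- The final vertex of a walk. -/
def finish (ω : Walk d) : Pt d := ω.pts.getLastD default

/-- The range (set of visited vertices) of a walk. -/
def range (ω : Walk d) : Set (Pt d) := {x | x ∈ ω.pts}

/-- The `i`-th vertex of a walk. -/
def nth (ω : Walk d) (i : ℕ) : Pt d := ω.pts.getD i default

/-- A walk is a loop if it has at least one step and ends where it began. -/
def IsLoop (ω : Walk d) : Prop := 1 ≤ ω.len ∧ ω.finish = ω.start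

end Walk

/-- The list of vertices of a self-avoiding polygon: a closed nearest-neighbour
walk all of whose vertices are distinct except that the last equals the first. -/
def IsSAPList {d : ℕ} (l : List (Pt d)) : Prop :=
  l.Chain' Adj ∧ 3 ≤ l.length ∧ l.getLastD default = l.headI ∧ l.dropLast.Nodup

/-- Change the initial vertex of a polygon list by a cyclic rotation. -/
def polyRot {d : ℕ} (l : List (Pt d)) (r : ℕ) : List (Pt d) :=
  l.dropLast.rotate r ++ [(l.dropLast.rotate r).headI]

/-- An isometry of the lattice ℤ^d: a bijection preserving ℓ¹ distance. -/
def IsLatticeIso {d : ℕ} (R : Pt d ≃ Pt d) : Prop :=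
  ∀ x y : Pt d, dist1 (R x) (R y) = dist1 x y

/-- The symmetry assumption on the loop activities: invariance under isometries of ℤ^d
and under change of initial vertex and of orientation of the polygon. -/
def SymmAssumption {d : ℕ} (lam : List (Pt d) → ℝ≥0) : Prop :=
  (∀ R : Pt d ≃ Pt d, IsLatticeIso R → ∀ l : List (Pt d), IsSAPList l →
      lam (l.map R) = lam l) ∧
  (∀ l : List (Pt d), IsSAPList l → ∀ r : ℕ, lam (polyRot l r) = lam l) ∧
  (∀ l : List (Pt d), IsSAPList l → lam l.reverse = lam l)

/-- The boundedness assumption: sup over self-avoiding polygons of the activity is finite. -/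
def BoundedAssumption {d : ℕ} (lam : List (Pt d) → ℝ≥0) : Prop :=
  ∃ M : ℝ≥0, ∀ l : List (Pt d), IsSAPList l → lam l ≤ M

/-- The product of the loop activities over the loops erased from `ω`, i.e. λ^{n_L(ω)}. -/
def wt0 {d : ℕ} (lam : List (Pt d) → ℝ≥0) (ω : Walk d) : ℝ≥0∞ :=
  ((erasedLoops ω.pts).map (fun η => (lam η : ℝ≥0∞))).prod

/-- The λ-LWW weight w_{λ,z}(ω) = z^{|ω|} λ^{n_L(ω)}. -/
def wt {d : ℕ} (lam : List (Pt d) → ℝ≥0) (z : ℝ≥0) (ω : Walk d) : ℝ≥0∞ :=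
  (z : ℝ≥0∞) ^ ω.len * wt0 lam ω

/-- The λ-LWW two-point function. -/
def G {d : ℕ} (lam : List (Pt d) → ℝ≥0) (z : ℝ≥0) (x y : Pt d) : ℝ≥0∞ :=
  ∑' ω : Walk d, if ω.start = x ∧ ω.finish = y then wt lam z ω else 0

/-- The λ-LWW loop measure μ_{λ,z}(A;B). -/
def mu {d : ℕ} (lam : List (Pt d) → ℝ≥0) (z : ℝ≥0) (A B : Set (Pt d)) : ℝ≥0∞ :=
  ∑' ω : Walk d,
    if ω.IsLoop ∧ (ω.range ∩ A).Nonempty ∧ ω.range ∩ B = ∅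
    then wt lam z ω / (ω.len : ℝ≥0∞) else 0

/-- The generalized λ-LWW loop measure μ_{λ,z}(A,B;C) with two hitting sets. -/
def mu2 {d : ℕ} (lam : List (Pt d) → ℝ≥0) (z : ℝ≥0) (A B C : Set (Pt d)) : ℝ≥0∞ :=
  ∑' ω : Walk d,
    if ω.IsLoop ∧ (ω.range ∩ A).Nonempty ∧ (ω.range ∩ B).Nonempty ∧ ω.range ∩ C = ∅
    then wt lam z ω / (ω.len : ℝ≥0∞) else 0

/-- exp : [0,∞] → [0,∞] with exp(∞) = ∞. -/
def eexp (x : ℝ≥0∞) : ℝ≥0∞ := if x = ⊤ then ⊤ else ENNReal.ofReal (Real.exp x.toReal)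

/-- The loop-erased λ-LWW weight w̄_{λ,z}(η) of a self-avoiding walk η. -/
def wbar {d : ℕ} (lam : List (Pt d) → ℝ≥0) (z : ℝ≥0) (η : Walk d) : ℝ≥0∞ :=
  ∑' ω : Walk d, if LE ω.pts = η.pts then wt lam z ω else 0

/-- c_n^λ : the total λ-LWW mass of n-step walks started at the origin. -/
def cN {d : ℕ} (lam : List (Pt d) → ℝ≥0) (n : ℕ) : ℝ≥0∞ :=
  ∑' ω : Walk d, if ω.start = 0 ∧ ω.len = n then wt0 lam ω else 0

/-- The susceptibility χ_λ(z) = Σ_n c_n^λ z^n. -/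
def chi {d : ℕ} (lam : List (Pt d) → ℝ≥0) (z : ℝ) : ℝ≥0∞ :=
  ∑' n : ℕ, cN lam n * ENNReal.ofReal z ^ n

/-- The critical point z_c(λ): the radius of convergence of the susceptibility
(for a power series with nonnegative coefficients this is the supremum of the
set of nonnegative z at which the series converges). -/
def zc {d : ℕ} (lam : List (Pt d) → ℝ≥0) : ℝ :=
  sSup {z : ℝ | 0 ≤ z ∧ chi lam z < ⊤}


/-- Loop insertion `η ⊕ [C]`: `i` is the minimal index with `η_i` a vertex of the
oriented cycle `[C]` (the rotation class of the self-avoiding polygon `C`); the unique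
representative `(c_0,…,c_k)` of `[C]` with `c_0 = η_i` is spliced into `η` at
position `i`. -/
def insertLoop {α : Type*} [DecidableEq α] [Inhabited α] (η C : List α) : List α :=
  match η.findIdx? (fun y => decide (y ∈ C)) with
  | none => η
  | some i =>
      η.take i
        ++ (C.dropLast.rotate (C.dropLast.idxOf (η.getD i default))
              ++ [η.getD i default])
        ++ η.drop (i + 1)

/-!
Single loop erasure scans `ω` keeping a self-avoiding prefix. At the first repeated vertex `x`
that prefix is `a ++ x :: b`, and `LE¹(ω) = a ++ x :: rest` with loop `x :: b ++ [x]`. Since the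
prefix is self-avoiding, no vertex of `a` lies on the loop, so insertion splices at the `x` right
after `a`, and the representative of the loop starting at `x` is the loop itself.
-/

section InsertErase

variable {α : Type*} [DecidableEq α]

theorem takeWhile_ne_append_cons {a b : List α} {x : α} (hx : x ∉ a) :
    (a ++ x :: b).takeWhile (· ≠ x) = a := by
  rw [List.takeWhile_append_of_pos fun y hy => by simpa using ne_of_mem_of_not_mem hy hx]
  simp

theorem dropWhile_ne_append_cons {a b : List α} {x : α} (hx : x ∉ a) :
    (a ++ x :: b).dropWhile (· ≠ x) = x :: b := by
  rw [List.dropWhile_append_of_pos fun y hy => by simpa using ne_of_mem_of_not_mem hy hx]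
  simp

theorem le1Aux_append_cons_of_not_mem {a b rest : List α} {x : α} (hx : x ∉ a) :
    le1Aux (a ++ x :: b) (x :: rest) = (a ++ x :: rest, some (x :: b ++ [x])) := by
  rw [le1Aux, if_pos (by simp), takeWhile_ne_append_cons hx, dropWhile_ne_append_cons hx]

theorem insertLoop_append_cons [Inhabited α] {a b rest : List α} {x : α}
    (hab : a.Disjoint (x :: b)) :
    insertLoop (a ++ x :: rest) (x :: b ++ [x]) = a ++ x :: b ++ x :: rest := by
  have hfind : (a ++ x :: rest).findIdx? (· ∈ x :: b ++ [x]) = some a.length := by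
    rw [List.findIdx?_append, List.findIdx?_eq_none_iff.mpr]
    · simp [List.findIdx?_cons]
    · intro y hy
      have := List.disjoint_left.mp hab hy
      simp_all
  have hdrop : (x :: b ++ [x]).dropLast = x :: b := List.dropLast_concat
  rw [insertLoop, hfind]
  simp only [List.take_left, hdrop]
  simp

theorem insertLoop_of_le1Aux_eq [Inhabited α] {η C : List α} :
    ∀ {pre l : List α}, pre.Nodup → le1Aux pre l = (η, some C) → insertLoop η C = pre ++ l
  | _, [], _, h => by simp [le1Aux] at h
  | pre, x :: rest, hpre, h => by
    by_cases hx : x ∈ pre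
    · obtain ⟨a, b, rfl⟩ := List.append_of_mem hx
      have hab : a.Disjoint (x :: b) := List.disjoint_of_nodup_append hpre
      have hxa : x ∉ a := fun h => hab h List.mem_cons_self
      rw [le1Aux_append_cons_of_not_mem hxa, Prod.mk.injEq, Option.some_inj] at h
      obtain ⟨rfl, rfl⟩ := h
      exact insertLoop_append_cons hab
    · rw [le1Aux, if_neg hx] at h
      rw [List.append_cons]
      exact insertLoop_of_le1Aux_eq (hpre.append (List.nodup_singleton x) (by simpa)) h

end InsertErase

theorem loop_insertion_inverts_erasure_general {d : ℕ} (ω : Walk d)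
    (C : List (Pt d)) (hC : removedLoop ω.pts = some C) :
    insertLoop (LE1 ω.pts) C = ω.pts :=
  insertLoop_of_le1Aux_eq List.nodup_nil (Prod.ext rfl hC)

/-- **Loop insertion inverts single loop erasure.**  Let `ω` be a walk on ℤ^d that is
not self-avoiding, and let `C = (ω_{τ*},…,ω_τ)` be the self-avoiding polygon removed
by the single loop erasure `LE¹(ω)`.  Then inserting the oriented cycle determined by
`C` into `LE¹(ω)` recovers `ω`: `LE¹(ω) ⊕ [C] = ω`. -/
theorem loop_insertion_inverts_erasure {d : ℕ} (ω : Walk d) (h : ¬ ω.pts.Nodup)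
    (C : List (Pt d)) (hC : removedLoop ω.pts = some C) :
    insertLoop (LE1 ω.pts) C = ω.pts :=
  loop_insertion_inverts_erasure_general ω C hC

end LWW
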